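/- SEP₁ <_W EC₁ <_W EC: the restricted separation problem is strictly continuously Weihrauch below EC₁, and EC₁ is strictly continuously Weihrauch below EC. -/

import Mathlib

open Filter Topology

abbrev Baire : Type := ℕ → ℕ

/-- The pairing `⟨p,q⟩(2n) = p(n)`, `⟨p,q⟩(2n+1) = q(n)`. -/
def pairB (p q : Baire) : Baire := fun n => if n % 2 = 0 then p (n / 2) else q (n / 2)

/-- A problem: a partial multivalued function on Baire space. -/
structure Problem where
  dom : Set Baire
  sol : Baire → Set Baire

/-- Continuous Weihrauch reducibility. -/
def WRed (f g : Problem) : Prop :=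
  ∃ (Kd Hd : Set Baire) (K H : Baire → Baire),
    ContinuousOn K Kd ∧ ContinuousOn H Hd ∧
      ∀ p ∈ f.dom, p ∈ Kd ∧ K p ∈ g.dom ∧
        ∀ q ∈ g.sol (K p), pairB p q ∈ Hd ∧ H (pairB p q) ∈ f.sol p

/-- Strong continuous Weihrauch reducibility. -/
def SWRed (f g : Problem) : Prop :=
  ∃ (Kd Hd : Set Baire) (K H : Baire → Baire),
    ContinuousOn K Kd ∧ ContinuousOn H Hd ∧
      ∀ p ∈ f.dom, p ∈ Kd ∧ K p ∈ g.dom ∧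
        ∀ q ∈ g.sol (K p), q ∈ Hd ∧ H q ∈ f.sol p

def WEquiv (f g : Problem) : Prop := WRed f g ∧ WRed g f
def SWEquiv (f g : Problem) : Prop := SWRed f g ∧ SWRed g f
def WLt (f g : Problem) : Prop := WRed f g ∧ ¬ WRed g f

/-- `range(p-1)`. -/
def rangeM (p : Baire) : Set ℕ := {n | ∃ i, p i = n + 1}

/-- Characteristic function of a set of naturals. -/
noncomputable def chi (A : Set ℕ) : Baire := A.indicator fun _ => 1

noncomputable def EC : Problem where
  dom := Set.univ
  sol := fun p => {chi (rangeM p)}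

noncomputable def EC1 : Problem where
  dom := {p | ((rangeM p)ᶜ).encard ≤ 1}
  sol := fun p => {chi (rangeM p)}

def pfst (r : Baire) : Baire := fun n => r (2 * n)
def psnd (r : Baire) : Baire := fun n => r (2 * n + 1)

noncomputable def SEP : Problem where
  dom := {r | rangeM (pfst r) ∩ rangeM (psnd r) = ∅}
  sol := fun r =>
    {s | ∃ A : Set ℕ, s = chi A ∧ rangeM (pfst r) ⊆ A ∧ A ⊆ (rangeM (psnd r))ᶜ}

noncomputable def SEP1 : Problem where
  dom := {r | rangeM (pfst r) ∩ rangeM (psnd r) = ∅ ∧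
    ((rangeM (pfst r) ∪ rangeM (psnd r))ᶜ).encard ≤ 1}
  sol := SEP.sol

/- rationals -/
def ratEnum (i : ℕ) : ℚ :=
  ((i.unpair.1 : ℚ) - (i.unpair.2.unpair.1 : ℚ)) / ((i.unpair.2.unpair.2 : ℚ) + 1)

def rhoCauchy (p : Baire) (x : ℝ) : Prop :=
  ∀ n, |(ratEnum (p n) : ℝ) - x| ≤ (2 : ℝ) ^ (-(n : ℤ))

def rhoNaive (p : Baire) (x : ℝ) : Prop :=
  Tendsto (fun n => ((ratEnum (p n) : ℝ))) atTop (nhds x)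

def rhoLt (p : Baire) (x : ℝ) : Prop := rangeM p = {n | (ratEnum n : ℝ) < x}
def rhoGt (p : Baire) (x : ℝ) : Prop := rangeM p = {n | x < (ratEnum n : ℝ)}

def rhoCfLt (p : Baire) (x : ℝ) : Prop :=
  (∀ n, p n ≤ 1) ∧ ∀ n, (p n = 1 ↔ (ratEnum n : ℝ) < x)
def rhoCfGt (p : Baire) (x : ℝ) : Prop :=
  (∀ n, p n ≤ 1) ∧ ∀ n, (p n = 1 ↔ x < (ratEnum n : ℝ))

noncomputable def cfTail : List ℕ → ℝ
  | [] => 0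
  | b :: l => 1 / ((b : ℝ) + cfTail l)

noncomputable def cfApprox (p : Baire) (k : ℕ) : ℝ :=
  ((Denumerable.ofNat ℤ (p 0) : ℤ) : ℝ) + cfTail ((List.range k).map fun i => p (i + 1))

def rhoCf (p : Baire) (x : ℝ) : Prop :=
  ((∀ i, 1 ≤ i → 1 ≤ p i) ∧ Tendsto (cfApprox p) atTop (nhds x)) ∨
    (∃ k, 1 ≤ k ∧ p k = 0 ∧ (∀ i, 1 ≤ i → i < k → 1 ≤ p i) ∧
      (2 ≤ k → 2 ≤ p (k - 1)) ∧ x = cfApprox p (k - 1))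

def rhoDec (p : Baire) (x : ℝ) : Prop :=
  (∀ n, 1 ≤ n → p n ≤ 9) ∧
    x = ((Denumerable.ofNat ℤ (p 0) : ℤ) : ℝ) + ∑' n : ℕ, (p (n + 1) : ℝ) / 10 ^ (n + 1)

/-- The implication problem between two representations of ℝ. -/
def implProblem (d1 d2 : Baire → ℝ → Prop) : Problem where
  dom := {p | ∃ x, d1 p x}
  sol := fun p => {q | ∃ x, d1 p x ∧ d2 q x}

/- trees / WKL / choice on Cantor space -/
def wordCode : List Bool → ℕ
  | [] => 0
  | b :: w => 2 * wordCode w + (if b then 2 else 1)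

def prefixList (x : Baire) (k : ℕ) : List Bool := (List.range k).map fun i => decide (x i = 1)

def isTreeCode (t : Baire) : Prop :=
  (∀ n, t n ≤ 1) ∧
    ∀ w v : List Bool, w <+: v → t (wordCode v) = 1 → t (wordCode w) = 1

def WKL : Problem where
  dom := {t | isTreeCode t ∧ {w : List Bool | t (wordCode w) = 1}.Infinite}
  sol := fun t => {x | (∀ n, x n ≤ 1) ∧ ∀ k, t (wordCode (prefixList x k)) = 1}

def Ap (p : Baire) : Set Baire :=
  {x | (∀ n, x n ≤ 1) ∧ ∀ k, wordCode (prefixList x k) ∉ rangeM p}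

def CCantor : Problem where
  dom := {p | (Ap p).Nonempty}
  sol := Ap

def Cle2 : Problem where
  dom := {p | (Ap p).Nonempty ∧ (Ap p).encard ≤ 2}
  sol := Ap

/- limit and parallelization -/
def projCount (r : Baire) (n : ℕ) : Baire := fun k => r (Nat.pair n k)

def limP : Problem where
  dom := {r | ∃ q : Baire, ∀ k, Tendsto (fun n => projCount r n k) atTop (nhds (q k))}
  sol := fun r => {q | ∀ k, Tendsto (fun n => projCount r n k) atTop (nhds (q k))}

def parallel (f : Problem) : Problem where
  dom := {r | ∀ n, projCount r n ∈ f.dom}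
  sol := fun r => {s | ∀ n, projCount s n ∈ f.sol (projCount r n)}

def MCT : Problem where
  dom := {r | ∃ xs : ℕ → ℝ, (∀ n, rhoCauchy (projCount r n) (xs n)) ∧
    Monotone xs ∧ BddAbove (Set.range xs)}
  sol := fun r => {q | ∃ xs : ℕ → ℝ, (∀ n, rhoCauchy (projCount r n) (xs n)) ∧
    Monotone xs ∧ BddAbove (Set.range xs) ∧ rhoCauchy q (⨆ n, xs n)}

/- SORT and RAT -/
open Classical in
noncomputable def sortOut (p : Baire) : Baire := fun k =>
  if {i | p i = 0}.Infinite then 0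
  else if k < {i | p i = 0}.ncard then 0 else 1

noncomputable def SORT : Problem where
  dom := {p | ∀ n, p n ≤ 1}
  sol := fun p => {sortOut p}

def znk (n : ℕ) : Baire := fun k => if k < n then 0 else 1

def RAT : Problem where
  dom := {p | ∃ x, rhoCauchy p x}
  sol := fun p => {s | ∃ x, rhoCauchy p x ∧
    ((∃ n, x = (ratEnum n : ℝ) ∧ s = znk n) ∨
      ((∀ r : ℚ, x ≠ (r : ℝ)) ∧ s = fun _ => 0))}

/- omniscience principles -/
def projFin (m i : ℕ) (r : Baire) : Baire := fun k => r (m * k + i - 1)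
def isZeroSeq (p : Baire) : Prop := ∀ k, p k = 0
def constSeq (i : ℕ) : Baire := fun _ => i

noncomputable def LPOn (n : ℕ) : Problem where
  dom := Set.univ
  sol := fun r => {constSeq ({i | 1 ≤ i ∧ i ≤ n ∧ isZeroSeq (projFin n i r)}.ncard)}

def LLPOn (n : ℕ) : Problem where
  dom := {r | {i | 1 ≤ i ∧ i ≤ n ∧ ¬ isZeroSeq (projFin n i r)}.encard ≤ 1}
  sol := fun r => {s | ∃ i, 1 ≤ i ∧ i ≤ n ∧ isZeroSeq (projFin n i r) ∧ s = constSeq i}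

def MLPOn (n : ℕ) : Problem where
  dom := {r | ∃ i, 1 ≤ i ∧ i ≤ n ∧ isZeroSeq (projFin n i r)}
  sol := fun r => {s | ∃ i, 1 ≤ i ∧ i ≤ n ∧ isZeroSeq (projFin n i r) ∧ s = constSeq i}

def LPO : Problem where
  dom := Set.univ
  sol := fun p => {s | (isZeroSeq p ∧ s = constSeq 1) ∨ (¬ isZeroSeq p ∧ s = constSeq 0)}

/- choice problems on ℕ etc. -/
def Cfin (n : ℕ) : Problem where
  dom := {p | ∃ i, i < n ∧ i ∉ rangeM p}
  sol := fun p => {s | ∃ i, i < n ∧ i ∉ rangeM p ∧ s = constSeq i}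

def ACCfin (n : ℕ) : Problem where
  dom := {p | (∃ i, i < n ∧ i ∉ rangeM p) ∧ ({i | i < n} ∩ rangeM p).encard ≤ 1}
  sol := (Cfin n).sol

def CNat : Problem where
  dom := {p | ∃ i, i ∉ rangeM p}
  sol := fun p => {s | ∃ i, i ∉ rangeM p ∧ s = constSeq i}

/- differentiation -/
instance : Countable (AddMonoidAlgebra ℚ ℕ) :=
  AddMonoidAlgebra.coeff_injective.countable

instance : Countable (Polynomial ℚ) :=
  Polynomial.toFinsupp_injective.countable

noncomputable def polyEnum : ℕ → Polynomial ℚ :=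
  (exists_surjective_nat (Polynomial ℚ)).choose

noncomputable def polyFun (k : ℕ) : C(Set.Icc (0:ℝ) 1, ℝ) :=
  ⟨fun x => ((polyEnum k).map (algebraMap ℚ ℝ)).eval (x : ℝ),
   (((polyEnum k).map (algebraMap ℚ ℝ)).continuous).comp continuous_subtype_val⟩

noncomputable def deltaC (p : Baire) (f : C(Set.Icc (0:ℝ) 1, ℝ)) : Prop :=
  ∀ n, ‖f - polyFun (p n)‖ ≤ (2 : ℝ) ^ (-(n : ℤ))

def IsDerivOn (f g : C(Set.Icc (0:ℝ) 1, ℝ)) : Prop :=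
  ∀ x : Set.Icc (0:ℝ) 1,
    HasDerivWithinAt (Set.IccExtend (by norm_num : (0:ℝ) ≤ 1) f) (g x) (Set.Icc 0 1) (x : ℝ)

noncomputable def diffP : Problem where
  dom := {p | ∃ f g, deltaC p f ∧ IsDerivOn f g}
  sol := fun p => {q | ∃ f g, deltaC p f ∧ IsDerivOn f g ∧ deltaC q g}


/-!
For `SEP₁ ≤ EC₁`, the instance `⟨p, q⟩` is itself an enumeration of `range(p-1) ∪ range(q-1)`,
whose complement has at most one element. Knowing which numbers it enumerates, wait for each of them to
appear and keep it iff it first appears on the side of `p`.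

Both nonreductions rest on one fact: a realiser `H`, continuous on its domain, that computes
`χ_{range(p-1)}` from `p` and some advice cannot let a number disappear in a limit: if `pᵢ → p` and
the advice converges as well, a number enumerated by every `pᵢ` is enumerated by `p`.

`EC₁ ≰ SEP₁`: the instances `vⱼ` that agree with `u i = i + 2` below `j` and enumerate everything
from `j` on converge to `u`, which misses `0`. Solutions of `SEP` range over the compact Cantor
space and the graph of `SEP` is closed, so a subsequence of advices for `K vⱼ` converges to an
advice for `K u`.

`EC ≰ EC₁`: the advice `χ_{range(K p - 1)}` is continuous in `p` wherever `K p` enumerates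
everything, so `K p` has a gap `m` whenever `p` misses a number. By Baire category one gap `m` is
shared on an open set, where the advice is then the constant `χ_{ℕ∖{m}}`; an instance in that set
that enumerates a fresh number late gives the contradiction.
-/

theorem Set.eq_compl_singleton_of_encard_compl_le_one {α : Type*} {S : Set α} {m : α}
    (h : Sᶜ.encard ≤ 1) (hm : m ∉ S) : S = {m}ᶜ := by
  ext n
  refine ⟨fun hn (hnm : n = m) => hm (hnm ▸ hn), fun hnm => ?_⟩
  by_contra hn
  exact hnm (Set.encard_le_one_iff.1 h n m hn hm)

section

variable {ι : Type*} {l : Filter ι}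

theorem tendsto_baire_iff {x : ι → Baire} {y : Baire} :
    Tendsto x l (𝓝 y) ↔ ∀ n, ∀ᶠ i in l, x i n = y n := by
  simp only [tendsto_pi_nhds, nhds_discrete, tendsto_pure]

theorem eventually_nhds_apply_eq (x : Baire) (n : ℕ) : ∀ᶠ y in 𝓝 x, y n = x n :=
  tendsto_baire_iff.1 tendsto_id n

theorem tendsto_ite_lt_atTop (p : Baire) (w : ℕ → Baire) :
    Tendsto (fun j i => if i < j then p i else w j i) atTop (𝓝 p) :=
  tendsto_baire_iff.2 fun n => (eventually_gt_atTop n).mono fun _ hj => if_pos hj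

theorem Filter.Tendsto.eventually_mem_rangeM {x : ι → Baire} {y : Baire} {n : ℕ}
    (h : Tendsto x l (𝓝 y)) (hn : n ∈ rangeM y) : ∀ᶠ i in l, n ∈ rangeM (x i) := by
  obtain ⟨k, hk⟩ := hn
  exact (tendsto_baire_iff.1 h k).mono fun i hi => ⟨k, hi.trans hk⟩

end

theorem isClosed_setOf_notMem_rangeM {f : Baire → Baire} (hf : Continuous f) (m : ℕ) :
    IsClosed {p | m ∉ rangeM (f p)} := by
  have : {p | m ∉ rangeM (f p)} = ⋂ i, (fun p => f p i) ⁻¹' {m + 1}ᶜ := by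
    ext
    simp [rangeM]
  rw [this]
  exact isClosed_iInter fun i => (isClosed_discrete _).preimage ((continuous_apply i).comp hf)

theorem isCompact_setOf_forall_le_one : IsCompact {f : Baire | ∀ n, f n ≤ 1} := by
  simpa [Set.pi] using isCompact_univ_pi fun _ : ℕ => (Set.finite_Iic 1).isCompact

theorem continuous_pairB : Continuous fun x : Baire × Baire => pairB x.1 x.2 :=
  continuous_pi fun n => by
    by_cases h : n % 2 = 0 <;> simp only [pairB, h, if_true, if_false] <;> fun_prop

theorem continuous_pfst : Continuous pfst := continuous_pi fun _ => continuous_apply _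

theorem continuous_psnd : Continuous psnd := continuous_pi fun _ => continuous_apply _

@[simp]
theorem pfst_pairB (p q : Baire) : pfst (pairB p q) = p := by
  ext n
  simp [pfst, pairB]

@[simp]
theorem psnd_pairB (p q : Baire) : psnd (pairB p q) = q := by
  ext n
  simp [psnd, pairB, Nat.add_mod, Nat.add_div]

theorem rangeM_eq_union (r : Baire) : rangeM r = rangeM (pfst r) ∪ rangeM (psnd r) := by
  ext n
  constructor
  · rintro ⟨k, hk⟩
    rcases Nat.even_or_odd' k with ⟨t, rfl | rfl⟩
    exacts [Or.inl ⟨t, hk⟩, Or.inr ⟨t, hk⟩]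
  · rintro (⟨t, ht⟩ | ⟨t, ht⟩)
    exacts [⟨2 * t, ht⟩, ⟨2 * t + 1, ht⟩]

theorem chi_of_mem {A : Set ℕ} {n : ℕ} (h : n ∈ A) : chi A n = 1 := Set.indicator_of_mem h _

theorem chi_of_notMem {A : Set ℕ} {n : ℕ} (h : n ∉ A) : chi A n = 0 :=
  Set.indicator_of_notMem h _

theorem chi_eq_one_iff {A : Set ℕ} {n : ℕ} : chi A n = 1 ↔ n ∈ A := by
  by_cases h : n ∈ A <;> simp [chi_of_mem, chi_of_notMem, h]

theorem chi_eq_zero_or_one (A : Set ℕ) (n : ℕ) : chi A n = 0 ∨ chi A n = 1 := by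
  by_cases h : n ∈ A <;> simp [chi_of_mem, chi_of_notMem, h]

theorem mem_SEP_sol_iff {r s : Baire} :
    s ∈ SEP.sol r ↔ ∀ n, (s n = 0 ∨ s n = 1) ∧
      (n ∈ rangeM (pfst r) → s n = 1) ∧ (n ∈ rangeM (psnd r) → s n = 0) := by
  constructor
  · rintro ⟨A, rfl, hPA, hAQ⟩ n
    exact ⟨chi_eq_zero_or_one A n, fun hn => chi_of_mem (hPA hn),
      fun hn => chi_of_notMem fun hA => hAQ hA hn⟩
  · intro h
    refine ⟨{n | s n = 1}, funext fun n => ?_, fun n hn => (h n).2.1 hn,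
      fun n hn hQ => by simp [(h n).2.2 hQ] at hn⟩
    rcases (h n).1 with h0 | h1
    · rw [h0, chi_of_notMem (by simp [h0])]
    · rw [h1, chi_of_mem (show n ∈ {n | s n = 1} from h1)]

theorem chi_rangeM_pfst_mem_SEP_sol {r : Baire} (hr : r ∈ SEP.dom) :
    chi (rangeM (pfst r)) ∈ SEP.sol r :=
  ⟨_, rfl, subset_rfl, fun n hP hQ => (Set.eq_empty_iff_forall_notMem.1 hr n) ⟨hP, hQ⟩⟩

theorem mem_SEP_sol_of_tendsto {ι : Type*} {l : Filter ι} [l.NeBot] {r s : ι → Baire}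
    {r₀ s₀ : Baire} (hr : Tendsto r l (𝓝 r₀)) (hs : Tendsto s l (𝓝 s₀))
    (hsol : ∀ᶠ i in l, s i ∈ SEP.sol (r i)) : s₀ ∈ SEP.sol r₀ := by
  refine mem_SEP_sol_iff.2 fun n => ?_
  have hP : ∀ᶠ i in l, n ∈ rangeM (pfst r₀) → n ∈ rangeM (pfst (r i)) :=
    eventually_imp_distrib_left.2 ((continuous_pfst.tendsto r₀).comp hr).eventually_mem_rangeM
  have hQ : ∀ᶠ i in l, n ∈ rangeM (psnd r₀) → n ∈ rangeM (psnd (r i)) :=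
    eventually_imp_distrib_left.2 ((continuous_psnd.tendsto r₀).comp hr).eventually_mem_rangeM
  obtain ⟨i, hsi, hPi, hQi, hsoli⟩ :=
    ((tendsto_baire_iff.1 hs n).and (hP.and (hQ.and hsol))).exists
  obtain ⟨hbit, hsP, hsQ⟩ := mem_SEP_sol_iff.1 hsoli n
  rw [hsi] at hbit hsP hsQ
  exact ⟨hbit, fun h => hsP (hPi h), fun h => hsQ (hQi h)⟩

theorem wRed_EC1_EC : WRed EC1 EC :=
  ⟨Set.univ, Set.univ, id, psnd, continuousOn_id, continuous_psnd.continuousOn,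
    fun _ _ => ⟨trivial, trivial, fun q hq => ⟨trivial, by rw [psnd_pairB]; exact hq⟩⟩⟩

open Classical in
noncomputable def sepOfChi (x : Baire) : Baire := fun n =>
  if h : psnd x n ≠ 0 ∧ n ∈ rangeM (pfst x) then (if Even (Nat.find h.2) then 1 else 0) else 0

theorem continuousAt_sepOfChi {x : Baire}
    (hx : ∀ n, psnd x n ≠ 0 → n ∈ rangeM (pfst x)) : ContinuousAt sepOfChi x := by
  refine tendsto_baire_iff.2 fun n => ?_
  by_cases h0 : psnd x n = 0
  · filter_upwards [eventually_nhds_apply_eq x (2 * n + 1)] with y hy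
    have hy0 : psnd y n = 0 := hy.trans h0
    simp [sepOfChi, hy0, h0]
  · have hn := hx n h0
    set k := Nat.find hn
    filter_upwards [eventually_nhds_apply_eq x (2 * n + 1),
      (eventually_all_finite (Set.finite_le_nat k)).2 fun i _ => eventually_nhds_apply_eq x (2 * i)]
      with y hy hyk
    have hy0 : psnd y n ≠ 0 := hy.trans_ne h0
    have hyn : n ∈ rangeM (pfst y) := ⟨k, (hyk k le_rfl).trans (Nat.find_spec hn)⟩
    have hfind : Nat.find hyn = k := (Nat.find_eq_iff hyn).2
      ⟨(hyk k le_rfl).trans (Nat.find_spec hn), fun i hi => by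
        change y (2 * i) ≠ n + 1
        rw [hyk i hi.le]
        exact Nat.find_min hn hi⟩
    simp [sepOfChi, hy0, h0, hyn, hn, hfind, k]

theorem sepOfChi_pairB {r : Baire} (hr : r ∈ SEP.dom) :
    sepOfChi (pairB r (chi (rangeM r))) = chi (rangeM (pfst r)) := by
  funext n
  by_cases hn : n ∈ rangeM r
  · set x := pairB r (chi (rangeM r))
    have h : psnd x n ≠ 0 ∧ n ∈ rangeM (pfst x) := by simp [x, chi_of_mem hn, hn]
    have hk : pfst x (Nat.find h.2) = n + 1 := Nat.find_spec h.2
    simp only [sepOfChi, dif_pos h]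
    generalize Nat.find h.2 = k at hk ⊢
    rw [pfst_pairB] at hk
    rcases Nat.even_or_odd' k with ⟨t, rfl | rfl⟩
    · simp [chi_of_mem (show n ∈ rangeM (pfst r) from ⟨t, hk⟩)]
    · have hP : n ∉ rangeM (pfst r) := fun hP =>
        (Set.eq_empty_iff_forall_notMem.1 hr n) ⟨hP, t, hk⟩
      simp [chi_of_notMem hP]
  · have hP : n ∉ rangeM (pfst r) := fun h => hn ((rangeM_eq_union r).symm ▸ Or.inl h)
    simp [sepOfChi, chi_of_notMem hn, chi_of_notMem hP]

theorem wRed_SEP1_EC1 : WRed SEP1 EC1 := by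
  refine ⟨Set.univ, {x | ∀ n, psnd x n ≠ 0 → n ∈ rangeM (pfst x)}, id, sepOfChi,
    continuousOn_id, fun x hx => (continuousAt_sepOfChi hx).continuousWithinAt, ?_⟩
  rintro r ⟨hdisj, hcard⟩
  refine ⟨trivial, show ((rangeM r)ᶜ).encard ≤ 1 by rwa [rangeM_eq_union], ?_⟩
  rintro q (rfl : q = chi (rangeM r))
  refine ⟨fun n hn => ?_, ?_⟩
  · rw [psnd_pairB] at hn
    by_contra h
    exact hn (chi_of_notMem (by simpa using h))
  · rw [sepOfChi_pairB hdisj]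
    exact chi_rangeM_pfst_mem_SEP_sol hdisj

def DecidesRange (H : Baire → Baire) (Hd : Set Baire) (p q : Baire) : Prop :=
  pairB p q ∈ Hd ∧ H (pairB p q) = chi (rangeM p)

theorem DecidesRange.mem_rangeM_of_tendsto {ι : Type*} {l : Filter ι} [l.NeBot]
    {H : Baire → Baire} {Hd : Set Baire} (hH : ContinuousOn H Hd) {p q : ι → Baire}
    {p₀ q₀ : Baire} (hdec : ∀ᶠ i in l, DecidesRange H Hd (p i) (q i))
    (hdec₀ : DecidesRange H Hd p₀ q₀) (hp : Tendsto p l (𝓝 p₀)) (hq : Tendsto q l (𝓝 q₀))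
    {a : ℕ} (ha : ∀ᶠ i in l, a ∈ rangeM (p i)) : a ∈ rangeM p₀ := by
  have hpair : Tendsto (fun i => pairB (p i) (q i)) l (𝓝[Hd] pairB p₀ q₀) :=
    tendsto_nhdsWithin_iff.2
      ⟨(continuous_pairB.tendsto _).comp (hp.prodMk_nhds hq), hdec.mono fun _ h => h.1⟩
  have hlim := (hH _ hdec₀.1).tendsto.comp hpair
  rw [hdec₀.2] at hlim
  obtain ⟨i, hi, hdeci, hai⟩ := ((tendsto_baire_iff.1 hlim a).and (hdec.and ha)).exists
  rw [Function.comp_apply, hdeci.2, chi_of_mem hai] at hi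
  exact chi_eq_one_iff.1 hi.symm

theorem not_wRed_EC1_SEP1 : ¬ WRed EC1 SEP1 := by
  rintro ⟨Kd, Hd, K, H, hK, hH, hred⟩
  set u : Baire := fun i => i + 2
  set v : ℕ → Baire := fun j i => if i < j then u i else i - j + 1
  have hu₀ : 0 ∉ rangeM u := fun ⟨i, hi⟩ => by simp [u] at hi
  have hu : u ∈ EC1.dom := by
    have h₀ : ∀ n ∉ rangeM u, n = 0 := fun n hn => by
      by_contra h
      exact hn ⟨n - 1, by simp only [u]; omega⟩
    exact Set.encard_le_one_iff.2 fun a b ha hb => (h₀ a ha).trans (h₀ b hb).symm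
  have hv : ∀ j, rangeM (v j) = Set.univ := fun j =>
    Set.eq_univ_of_forall fun n => ⟨j + n, by simp [v]⟩
  have hvdom : ∀ j, v j ∈ EC1.dom := fun j => by simp [EC1, hv j]
  have hvu : Tendsto v atTop (𝓝 u) := tendsto_ite_lt_atTop u _
  have hKv : Tendsto (fun j => K (v j)) atTop (𝓝 (K u)) :=
    (hK u (hred u hu).1).tendsto.comp
      (tendsto_nhdsWithin_iff.2 ⟨hvu, Eventually.of_forall fun j => (hred _ (hvdom j)).1⟩)
  have hsol : ∀ j, chi (rangeM (pfst (K (v j)))) ∈ SEP.sol (K (v j)) := fun j =>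
    chi_rangeM_pfst_mem_SEP_sol (hred _ (hvdom j)).2.1.1
  obtain ⟨s, -, φ, hφ, hs⟩ := isCompact_setOf_forall_le_one.tendsto_subseq
    fun j n => (mem_SEP_sol_iff.1 (hsol j) n).1.elim (·.le.trans zero_le_one) (·.le)
  have hsu : s ∈ SEP.sol (K u) :=
    mem_SEP_sol_of_tendsto (hKv.comp hφ.tendsto_atTop) hs
      (Eventually.of_forall fun j => hsol (φ j))
  refine hu₀ (DecidesRange.mem_rangeM_of_tendsto hH
    (Eventually.of_forall fun j => (hred _ (hvdom (φ j))).2.2 _ (hsol (φ j)))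
    ((hred u hu).2.2 s hsu) (hvu.comp hφ.tendsto_atTop) hs
    (Eventually.of_forall fun j => ?_))
  simp [hv]

theorem exists_notMem_rangeM_of_decidesRange {K H : Baire → Baire} {Hd : Set Baire}
    (hK : Continuous K) (hH : ContinuousOn H Hd)
    (hdec : ∀ p, DecidesRange H Hd p (chi (rangeM (K p)))) {p : Baire} {a : ℕ}
    (ha : a ∉ rangeM p) : ∃ m, m ∉ rangeM (K p) := by
  by_contra! hall
  have hw := tendsto_ite_lt_atTop p fun _ _ => a + 1
  have hKw := (hK.tendsto p).comp hw
  have hchi : Tendsto (fun j => chi (rangeM (K fun i => if i < j then p i else a + 1))) atTop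
      (𝓝 (chi (rangeM (K p)))) :=
    tendsto_baire_iff.2 fun n => (hKw.eventually_mem_rangeM (hall n)).mono fun _ hj => by
      rw [Function.comp_apply] at hj
      rw [chi_of_mem hj, chi_of_mem (hall n)]
  exact ha (DecidesRange.mem_rangeM_of_tendsto hH (Eventually.of_forall fun _ => hdec _)
    (hdec p) hw hchi (Eventually.of_forall fun j => ⟨j, by simp⟩))

theorem not_wRed_EC_EC1 : ¬ WRed EC EC1 := by
  rintro ⟨Kd, Hd, K, H, hK, hH, hred⟩
  have hKc : Continuous K := continuousOn_univ.1 (hK.mono fun p _ => (hred p trivial).1)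
  have hdec : ∀ p, DecidesRange H Hd p (chi (rangeM (K p))) := fun p =>
    (hred p trivial).2.2 _ rfl
  -- instances `D p` never enumerate `0`, so `K` leaves a gap on each of them
  set D : Baire → Baire := fun p k => 2 * p k
  have hD : Continuous D := continuous_pi fun k => continuous_const.mul (continuous_apply k)
  obtain ⟨m, x₀, hx₀⟩ := nonempty_interior_of_iUnion_of_closed
    (isClosed_setOf_notMem_rangeM (hKc.comp hD))
    (Set.eq_univ_of_forall fun p => Set.mem_iUnion.2 <|
      exists_notMem_rangeM_of_decidesRange hKc hH hdec (p := D p) (a := 0) fun ⟨k, hk⟩ => by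
        simp only [D] at hk; omega)
  set U := interior {p | m ∉ rangeM (K (D p))}
  have hU : ∀ p ∈ U, chi (rangeM (K (D p))) = chi {m}ᶜ := fun p hp =>
    congrArg chi (Set.eq_compl_singleton_of_encard_compl_le_one (hred _ trivial).2.1
      (interior_subset hp))
  -- a truncation `p₀` of `x₀` still lies in `U` and misses `b`
  obtain ⟨J, hJ⟩ := ((tendsto_ite_lt_atTop x₀ fun _ _ => 0).eventually
    (isOpen_interior.mem_nhds hx₀)).exists
  set p₀ : Baire := fun i => if i < J then x₀ i else 0
  set b := (Finset.range J).sup x₀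
  have hw := tendsto_ite_lt_atTop p₀ fun _ _ => b + 1
  have hwU := hw.eventually (isOpen_interior.mem_nhds hJ)
  obtain ⟨k, hk⟩ : 2 * b + 1 ∈ rangeM (D p₀) :=
    DecidesRange.mem_rangeM_of_tendsto hH (Eventually.of_forall fun _ => hdec _) (hdec _)
      ((hD.tendsto p₀).comp hw)
      (tendsto_const_nhds.congr' (hwU.mono fun j hj => (hU _ hJ).trans (hU _ hj).symm))
      (Eventually.of_forall fun j => ⟨j, by simp [D]; ring⟩)
  have hkJ : k < J := by
    by_contra h
    simp [D, p₀, h] at hk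
  have : x₀ k ≤ b := Finset.le_sup (Finset.mem_range.2 hkJ)
  simp only [D, p₀, if_pos hkJ] at hk
  omega

/-- `SEP₁ <_W EC₁ <_W EC`. -/
theorem SEP1_lt_EC1_lt_EC : WLt SEP1 EC1 ∧ WLt EC1 EC :=
  ⟨⟨wRed_SEP1_EC1, not_wRed_EC1_SEP1⟩, wRed_EC1_EC, not_wRed_EC_EC1⟩
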